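/- Let X = {(X_i, x_i) : i = 1,...,n} be a finite system of point-masses in the hyperbolic plane with center of mass (C, c) (defined by iterating the binary centroid operation *). Then c = Σ_{i=1}^n x_i·cosh(d(X_i, C)). -/

import Mathlib

/-!
In the hyperboloid model a point `w` of `ℍ` becomes a unit timelike vector
`F w = toHyperboloid w` of Minkowski space `ℝ^{1,2}`, and `⟪F z, F w⟫ = cosh d(z, w)`. In this model the binary centroid
is linear, `z • F Z = x • F X + y • F Y`: the difference `V` of the two sides is orthogonal to
`F Z` by the mass formula, and null by the balance of moments together with
`d(X, Y) = d(X, Z) + d(Z, Y)`; a null vector orthogonal to a timelike one vanishes.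
By induction `c • F C = ∑ xᵢ • F Xᵢ`, and pairing with `F C` gives the theorem.
-/

open Real UpperHalfPlane

noncomputable section

/-- `Z` lies on the geodesic segment from `X` to `Y` (hyperbolic betweenness). -/
def HBtw (X Z Y : ℍ) : Prop := dist X Z + dist Z Y = dist X Y

/-- `(Z, z)` is the hyperbolic centroid of the point-masses `(X, x)` and `(Y, y)`:
`Z` lies between `X` and `Y`, the moments about `Z` balance, and
`z = x·cosh d(X,Z) + y·cosh d(Y,Z)`. -/
def IsCentroid (X : ℍ) (x : ℝ) (Y : ℍ) (y : ℝ) (Z : ℍ) (z : ℝ) : Prop :=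
  HBtw X Z Y ∧ x * Real.sinh (dist X Z) = y * Real.sinh (dist Y Z) ∧
    z = x * Real.cosh (dist X Z) + y * Real.cosh (dist Y Z)

/-- `(C, c)` is the center of mass of the finite point-mass system
`(X i, x i), i = 0, …, n`, obtained by iterating the binary centroid operation. -/
def IsSystemCentroid : {n : ℕ} → (Fin (n + 1) → ℍ) → (Fin (n + 1) → ℝ) → ℍ → ℝ → Prop
  | 0, X, x, C, c => C = X 0 ∧ c = x 0
  | n + 1, X, x, C, c => ∃ C' c', IsSystemCentroid (Fin.init X) (Fin.init x) C' c' ∧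
      IsCentroid C' c' (X (Fin.last (n + 1))) (x (Fin.last (n + 1))) C c

def minkowski : LinearMap.BilinForm ℝ (Fin 3 → ℝ) :=
  LinearMap.mk₂ ℝ (fun u v => u 0 * v 0 - u 1 * v 1 - u 2 * v 2)
    (fun _ _ _ => by simp only [Pi.add_apply]; ring)
    (fun _ _ _ => by simp only [Pi.smul_apply, smul_eq_mul]; ring)
    (fun _ _ _ => by simp only [Pi.add_apply]; ring)
    (fun _ _ _ => by simp only [Pi.smul_apply, smul_eq_mul]; ring)

theorem minkowski_apply (u v : Fin 3 → ℝ) :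
    minkowski u v = u 0 * v 0 - u 1 * v 1 - u 2 * v 2 := rfl

theorem eq_zero_of_minkowski_self_eq_zero_of_orthogonal {u v : Fin 3 → ℝ}
    (hu : 0 < minkowski u u) (hv : minkowski v v = 0) (huv : minkowski u v = 0) : v = 0 := by
  simp only [minkowski_apply] at hu hv huv
  have hcs : (u 1 * v 1 + u 2 * v 2) ^ 2 ≤ (u 1 ^ 2 + u 2 ^ 2) * (v 1 ^ 2 + v 2 ^ 2) := by
    nlinarith [sq_nonneg (u 1 * v 2 - u 2 * v 1)]
  have hq : (u 0 * u 0 - u 1 * u 1 - u 2 * u 2) * v 0 ^ 2 ≤ 0 := by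
    have hs : u 0 * v 0 = u 1 * v 1 + u 2 * v 2 := by linarith
    have hv' : v 1 ^ 2 + v 2 ^ 2 = v 0 ^ 2 := by linarith
    calc (u 0 * u 0 - u 1 * u 1 - u 2 * u 2) * v 0 ^ 2
        = (u 1 * v 1 + u 2 * v 2) ^ 2 - (u 1 ^ 2 + u 2 ^ 2) * (v 1 ^ 2 + v 2 ^ 2) := by
          rw [← hs, hv']; ring
      _ ≤ 0 := sub_nonpos.mpr hcs
  have h0 : v 0 = 0 := pow_eq_zero_iff two_ne_zero |>.mp
    (le_antisymm (nonpos_of_mul_nonpos_right hq hu) (sq_nonneg _))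
  have h1 : v 1 = 0 := by nlinarith [sq_nonneg (v 1), sq_nonneg (v 2)]
  have h2 : v 2 = 0 := by nlinarith [sq_nonneg (v 1), sq_nonneg (v 2)]
  ext i; fin_cases i <;> assumption

def toHyperboloid (w : ℍ) : Fin 3 → ℝ :=
  ![(w.re ^ 2 + w.im ^ 2 + 1) / (2 * w.im), w.re / w.im, (w.re ^ 2 + w.im ^ 2 - 1) / (2 * w.im)]

@[simp]
theorem minkowski_toHyperboloid (z w : ℍ) :
    minkowski (toHyperboloid z) (toHyperboloid w) = cosh (dist z w) := by
  rw [cosh_dist', minkowski_apply]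
  have hz := z.im_pos
  have hw := w.im_pos
  simp only [toHyperboloid, Matrix.cons_val_zero, Matrix.cons_val_one, Matrix.cons_val_two,
    Matrix.head_cons, Matrix.tail_cons]
  field_simp
  ring

theorem IsCentroid.smul_toHyperboloid {X Y Z : ℍ} {x y z : ℝ} (h : IsCentroid X x Y y Z z) :
    z • toHyperboloid Z = x • toHyperboloid X + y • toHyperboloid Y := by
  obtain ⟨hbtw, hbal, hz⟩ := h
  set a := dist X Z
  set b := dist Y Z
  have hXY : dist X Y = a + b := by rw [← hbtw, dist_comm Z Y]
  set V := x • toHyperboloid X + y • toHyperboloid Y - z • toHyperboloid Z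
  have horth : minkowski (toHyperboloid Z) V = 0 := by
    simp only [V, map_add, map_sub, map_smul, smul_eq_mul, minkowski_toHyperboloid, dist_self,
      cosh_zero]
    rw [dist_comm Z X, dist_comm Z Y, hz]; ring
  have hnull : minkowski V V = 0 := by
    simp only [V, map_add, map_sub, map_smul, LinearMap.add_apply, LinearMap.sub_apply,
      LinearMap.smul_apply, smul_eq_mul, minkowski_toHyperboloid, dist_self, cosh_zero]
    rw [dist_comm Y X, dist_comm Z X, dist_comm Z Y, hXY, cosh_add, hz]
    linear_combination (y * sinh b - x * sinh a) * hbal - x ^ 2 * cosh_sq_sub_sinh_sq a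
      - y ^ 2 * cosh_sq_sub_sinh_sq b
  have hV : V = 0 :=
    eq_zero_of_minkowski_self_eq_zero_of_orthogonal (by simp) hnull horth
  exact (sub_eq_zero.mp hV).symm

theorem IsSystemCentroid.smul_toHyperboloid {n : ℕ} {X : Fin (n + 1) → ℍ}
    {x : Fin (n + 1) → ℝ} {C : ℍ} {c : ℝ} (h : IsSystemCentroid X x C c) :
    c • toHyperboloid C = ∑ i, x i • toHyperboloid (X i) := by
  induction n generalizing C c with
  | zero =>
    obtain ⟨rfl, rfl⟩ := h
    simp
  | succ n ih =>
    obtain ⟨C', c', hsys, hcent⟩ := h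
    rw [hcent.smul_toHyperboloid, ih hsys,
      Fin.sum_univ_castSucc fun i => x i • toHyperboloid (X i)]
    rfl

theorem mass_eq_sum_cosh_general (n : ℕ) (X : Fin (n + 1) → ℍ) (x : Fin (n + 1) → ℝ)
    (C : ℍ) (c : ℝ) (h : IsSystemCentroid X x C c) :
    c = ∑ i, x i * Real.cosh (dist (X i) C) := by
  have hpair := congrArg (fun v => minkowski v (toHyperboloid C)) h.smul_toHyperboloid
  simpa [map_sum] using hpair

/-- Theorem 3.7: if `(C, c)` is the center of mass of the finite point-mass system
`{(X i, x i)}`, then `c = Σ x i · cosh(d(X i, C))`. -/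
theorem mass_eq_sum_cosh (n : ℕ) (X : Fin (n + 1) → ℍ) (x : Fin (n + 1) → ℝ)
    (hx : ∀ i, 0 < x i) (C : ℍ) (c : ℝ) (h : IsSystemCentroid X x C c) :
    c = ∑ i, x i * Real.cosh (dist (X i) C) :=
  mass_eq_sum_cosh_general n X x C c h
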